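/- arXiv:1501.02328 — 6 statements merged into one kernel-verified Lean document; each statement's English description precedes it below -/
import Mathlib

section
/- Let n ≥ 1 and consider the map π : Matrix (Fin n) (Fin n) ℝ → Sym(n,ℝ) × ℝ defined by π(X) = (X Xᵀ, det X). Then (i) the fibres of π coincide exactly with the orbits of the right action of SO(n) on n×n real matrices given by X ↦ X C⁻¹ for C ∈ SO(n) (i.e. π(X) = π(Y) if and only if Y = X C for some C ∈ SO(n)). -/
open Matrix


open Matrix

/-- The map `π : X ↦ (X Xᵀ, det X)` into (symmetric matrices) × ℝ. -/
noncomputable def piMap (n : ℕ) (X : Matrix (Fin n) (Fin n) ℝ) :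
    {A : Matrix (Fin n) (Fin n) ℝ // A.IsSymm} × ℝ :=
  (⟨X * Xᵀ, (Matrix.isSymm_mul_transpose_self X)⟩, X.det)

/-! `X Xᵀ` is the Gram matrix of the rows of `X`, so `X Xᵀ = Y Yᵀ` yields a linear isometry of
`ℝⁿ` carrying the rows of `X` to those of `Y`, that is `Y = X C` with `C` orthogonal. Then
`det Y = det X · det C`; if `det C = -1` this forces `det X = 0`, and precomposing `C` with the
Householder reflection in a unit vector of `ker X` fixes the sign without moving `X`. -/

section InnerProductSpace

variable {𝕜 W V : Type*} [RCLike 𝕜] [AddCommGroup W] [Module 𝕜 W]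
  [NormedAddCommGroup V] [InnerProductSpace 𝕜 V] [FiniteDimensional 𝕜 V]

theorem LinearMap.exists_linearIsometry_comp_eq_of_norm_eq (A B : W →ₗ[𝕜] V)
    (h : ∀ w, ‖A w‖ = ‖B w‖) : ∃ g : V →ₗᵢ[𝕜] V, g.toLinearMap ∘ₗ A = B := by
  have hker : LinearMap.ker A ≤ LinearMap.ker B := fun w hw => by
    rw [LinearMap.mem_ker, ← norm_eq_zero, ← h, hw, norm_zero]
  set f : LinearMap.range A →ₗ[𝕜] V :=
    (LinearMap.ker A).liftQ B hker ∘ₗ A.quotKerEquivRange.symm.toLinearMap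
  have hf : ∀ w, f ⟨A w, LinearMap.mem_range_self A w⟩ = B w := fun w => by
    simp [f, A.quotKerEquivRange_symm_apply_image]
  have hf_norm : ∀ s, ‖f s‖ = ‖(s : V)‖ := by
    rintro ⟨_, w, rfl⟩
    rw [hf, ← h]
  refine ⟨(⟨f, hf_norm⟩ : LinearMap.range A →ₗᵢ[𝕜] V).extend, LinearMap.ext fun w => ?_⟩
  exact (LinearIsometry.extend_apply _ ⟨A w, LinearMap.mem_range_self A w⟩).trans (hf w)

end InnerProductSpace

namespace Matrix

variable {𝕜 m n : Type*} [RCLike 𝕜] [Fintype m] [DecidableEq m] [Fintype n] [DecidableEq n]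

theorem norm_toEuclideanLin_conjTranspose_sq (X : Matrix m n 𝕜) (v : EuclideanSpace 𝕜 m) :
    ‖toEuclideanLin Xᴴ v‖ ^ 2 = RCLike.re (inner 𝕜 v (toEuclideanLin (X * Xᴴ) v)) := by
  rw [@norm_sq_eq_re_inner 𝕜, toEuclideanLin_conjTranspose_eq_adjoint,
    LinearMap.adjoint_inner_left, ← toEuclideanLin_conjTranspose_eq_adjoint, toLpLin_mul_same,
    LinearMap.comp_apply]

theorem mem_unitaryGroup_of_toEuclideanLin_eq (U : Matrix n n 𝕜)
    (g : EuclideanSpace 𝕜 n →ₗᵢ[𝕜] EuclideanSpace 𝕜 n)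
    (hU : toEuclideanLin U = g.toLinearMap) : U ∈ unitaryGroup n 𝕜 := by
  rw [mem_unitaryGroup_iff', star_eq_conjTranspose]
  apply toEuclideanLin.injective
  rw [toLpLin_mul_same, toEuclideanLin_conjTranspose_eq_adjoint, hU,
    LinearIsometry.adjoint_comp_self', toLpLin_one]

theorem exists_mem_unitaryGroup_eq_mul_of_mul_conjTranspose_eq {X Y : Matrix m n 𝕜}
    (h : X * Xᴴ = Y * Yᴴ) : ∃ U ∈ unitaryGroup n 𝕜, Y = X * U := by
  obtain ⟨g, hg⟩ := LinearMap.exists_linearIsometry_comp_eq_of_norm_eq (toEuclideanLin Xᴴ)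
    (toEuclideanLin Yᴴ) fun v => by
      rw [← sq_eq_sq₀ (norm_nonneg _) (norm_nonneg _), norm_toEuclideanLin_conjTranspose_sq,
        norm_toEuclideanLin_conjTranspose_sq, h]
  set M := toEuclideanLin.symm g.toLinearMap
  have hM : toEuclideanLin M = g.toLinearMap := toEuclideanLin.apply_symm_apply _
  refine ⟨Mᴴ, ?_, ?_⟩
  · rw [← star_eq_conjTranspose]
    exact Unitary.star_mem (mem_unitaryGroup_of_toEuclideanLin_eq M g hM)
  · have : M * Xᴴ = Yᴴ := toEuclideanLin.injective (by rw [toLpLin_mul_same, hM, hg])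
    rw [← conjTranspose_conjTranspose Y, ← this, conjTranspose_mul, conjTranspose_conjTranspose]

theorem det_one_add_vecMulVec {R : Type*} [CommRing R] (u v : n → R) :
    (1 + vecMulVec u v).det = 1 + v ⬝ᵥ u := by
  rw [vecMulVec_eq (Fin 1), det_one_add_replicateCol_mul_replicateRow]

def householder (u : n → 𝕜) : Matrix n n 𝕜 := 1 - (2 : 𝕜) • vecMulVec u (star u)

variable {u : n → 𝕜}

theorem householder_mem_unitaryGroup (hu : star u ⬝ᵥ u = 1) :
    householder u ∈ unitaryGroup n 𝕜 := by
  have hP : vecMulVec u (star u) * vecMulVec u (star u) = vecMulVec u (star u) := by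
    rw [vecMulVec_mul_vecMulVec, hu, one_smul]
  have hself : (householder u)ᴴ = householder u := by
    simp [householder, conjTranspose_sub, conjTranspose_smul, conjTranspose_vecMulVec]
  rw [mem_unitaryGroup_iff, star_eq_conjTranspose, hself, householder]
  simp only [sub_mul, mul_sub, one_mul, mul_one, smul_mul_smul, hP]
  module

theorem det_householder (hu : star u ⬝ᵥ u = 1) : (householder u).det = -1 := by
  rw [householder, sub_eq_add_neg, ← neg_smul, ← vecMulVec_smul, det_one_add_vecMulVec,
    smul_dotProduct, hu]
  norm_num

theorem mul_householder_of_mulVec_eq_zero (X : Matrix n n 𝕜) (hX : X *ᵥ u = 0) :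
    X * householder u = X := by
  rw [householder, mul_sub, mul_one, Matrix.mul_smul, mul_vecMulVec, hX, zero_vecMulVec,
    smul_zero, sub_zero]

theorem exists_unit_mulVec_eq_zero_of_det_eq_zero {X : Matrix n n 𝕜} (hX : X.det = 0) :
    ∃ u : n → 𝕜, star u ⬝ᵥ u = 1 ∧ X *ᵥ u = 0 := by
  obtain ⟨v, hv, hXv⟩ := exists_mulVec_eq_zero_iff.mpr hX
  set u := WithLp.toLp 2 v
  have hu : u ≠ 0 := by simpa [u] using hv
  refine ⟨((‖u‖ : 𝕜)⁻¹ • v), ?_, by rw [mulVec_smul, hXv, smul_zero]⟩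
  have h := EuclideanSpace.inner_eq_star_dotProduct ((‖u‖ : 𝕜)⁻¹ • u) ((‖u‖ : 𝕜)⁻¹ • u)
  rw [inner_self_eq_norm_sq_to_K, norm_smul_inv_norm hu] at h
  simpa [u, dotProduct_comm] using h.symm

theorem exists_mem_unitaryGroup_det_eq_neg_one_mul_eq_self {X : Matrix n n 𝕜}
    (hX : X.det = 0) : ∃ D ∈ unitaryGroup n 𝕜, D.det = -1 ∧ X * D = X := by
  obtain ⟨u, hu, hXu⟩ := exists_unit_mulVec_eq_zero_of_det_eq_zero hX
  exact ⟨householder u, householder_mem_unitaryGroup hu, det_householder hu,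
    mul_householder_of_mulVec_eq_zero X hXu⟩

theorem det_eq_one_or_eq_neg_one_of_mul_transpose_eq_one {n R : Type*} [Fintype n]
    [DecidableEq n] [CommRing R] [NoZeroDivisors R] {C : Matrix n n R} (hC : C * Cᵀ = 1) :
    C.det = 1 ∨ C.det = -1 := by
  rw [← mul_self_eq_one_iff]
  nth_rw 2 [← det_transpose C]
  rw [← det_mul, hC, det_one]

end Matrix

theorem piMap_eq_iff {n : ℕ} {X Y : Matrix (Fin n) (Fin n) ℝ} :
    piMap n X = piMap n Y ↔ X * Xᵀ = Y * Yᵀ ∧ X.det = Y.det := by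
  simp [piMap, Prod.ext_iff, Subtype.ext_iff]

theorem stmt0_general (n : ℕ) (X Y : Matrix (Fin n) (Fin n) ℝ) :
    piMap n X = piMap n Y ↔
      ∃ C : Matrix (Fin n) (Fin n) ℝ, C * Cᵀ = 1 ∧ C.det = 1 ∧ Y = X * C := by
  simp only [piMap_eq_iff, ← mem_orthogonalGroup_iff]
  constructor
  · rintro ⟨hgram, hdet⟩
    obtain ⟨C, hC, rfl⟩ :=
      exists_mem_unitaryGroup_eq_mul_of_mul_conjTranspose_eq (X := X) (Y := Y)
      (by rwa [conjTranspose_eq_transpose_of_trivial, conjTranspose_eq_transpose_of_trivial])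
    rcases det_eq_one_or_eq_neg_one_of_mul_transpose_eq_one ((mem_orthogonalGroup_iff _ ℝ).mp hC)
      with hC1 | hC1
    · exact ⟨C, hC, hC1, rfl⟩
    · obtain ⟨D, hD, hD1, hXD⟩ := exists_mem_unitaryGroup_det_eq_neg_one_mul_eq_self
        (by rw [det_mul, hC1] at hdet; linarith : X.det = 0)
      exact ⟨D * C, mul_mem hD hC, by rw [det_mul, hD1, hC1]; norm_num, by rw [← mul_assoc, hXD]⟩
  · rintro ⟨C, hC, hC1, rfl⟩
    rw [det_mul, hC1, mul_one, transpose_mul, mul_assoc, ← mul_assoc C,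
      (mem_orthogonalGroup_iff _ ℝ).mp hC, one_mul]
    exact ⟨rfl, rfl⟩

/-- The fibres of `π(X) = (X Xᵀ, det X)` coincide with the orbits of the right action
`X ↦ X C⁻¹` of `SO(n)`. -/
theorem stmt0 (n : ℕ) (hn : 1 ≤ n) (X Y : Matrix (Fin n) (Fin n) ℝ) :
    piMap n X = piMap n Y ↔
      ∃ C : Matrix (Fin n) (Fin n) ℝ, C * Cᵀ = 1 ∧ C.det = 1 ∧ Y = X * C :=
  stmt0_general n X Y
end

section
/- Let n ≥ 1. The image of the map π : Matrix (Fin n) (Fin n) ℝ → Sym(n,ℝ) × ℝ, π(X) = (X Xᵀ, det X), is exactly the set M(n,ℝ) = {(A, λ) ∈ Sym(n,ℝ) × ℝ : A is positive semidefinite and det A = λ²}. -/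
/-!
`X Xᵀ` is positive semidefinite with determinant `(det X)²`. Conversely, if `A` is positive
semidefinite with `det A = λ²`, its symmetric square root `B` satisfies `B Bᵀ = A` and
`det B = ±λ`; when the sign is wrong, replace `B` by `B D` for an orthogonal reflection `D`,
which exists as soon as `n ≥ 1`.
-/

open Matrix

variable {ι : Type*} [Fintype ι]

theorem Matrix.posSemidef_mul_transpose_self (X : Matrix ι ι ℝ) : (X * Xᵀ).PosSemidef := by
  simpa using posSemidef_self_mul_conjTranspose X

variable [DecidableEq ι]

theorem Matrix.PosSemidef.exists_symm_mul_self_eq {A : Matrix ι ι ℝ} (hA : A.PosSemidef) :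
    ∃ B : Matrix ι ι ℝ, Bᵀ = B ∧ B * B = A := by
  open MatrixOrder in
  exact ⟨CFC.sqrt A, by simpa using (CFC.sqrt_nonneg A).posSemidef.isHermitian.eq,
    CFC.sqrt_mul_sqrt_self A hA.nonneg⟩

noncomputable def Matrix.coordReflection (i : ι) : Matrix ι ι ℝ :=
  diagonal (Function.update 1 i (-1))

theorem Matrix.coordReflection_mul_transpose (i : ι) :
    coordReflection i * (coordReflection i)ᵀ = 1 := by
  rw [coordReflection, diagonal_transpose, diagonal_mul_diagonal, ← diagonal_one]
  congr 1
  ext j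
  by_cases h : j = i <;> simp [h]

theorem Matrix.det_coordReflection (i : ι) : (coordReflection i).det = -1 := by
  rw [coordReflection, det_diagonal, Finset.prod_update_of_mem (Finset.mem_univ i)]
  simp

theorem Matrix.PosSemidef.exists_mul_transpose_self_eq_of_det_eq_sq [Nonempty ι]
    {A : Matrix ι ι ℝ} (hA : A.PosSemidef) {l : ℝ} (hdet : A.det = l ^ 2) :
    ∃ X : Matrix ι ι ℝ, X * Xᵀ = A ∧ X.det = l := by
  obtain ⟨B, hBsymm, hBB⟩ := hA.exists_symm_mul_self_eq
  have hBBt : B * Bᵀ = A := by rw [hBsymm, hBB]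
  have hdetB : B.det * B.det = l * l := by rw [← det_mul, hBB, hdet, sq]
  rcases mul_self_eq_mul_self_iff.mp hdetB with h | h
  · exact ⟨B, hBBt, h⟩
  · let D := coordReflection (Classical.arbitrary ι)
    refine ⟨B * D, ?_, ?_⟩
    · rw [transpose_mul, Matrix.mul_assoc, ← Matrix.mul_assoc D, coordReflection_mul_transpose,
        Matrix.one_mul, hBBt]
    · rw [det_mul, det_coordReflection, h, neg_mul_neg, mul_one]

/-- The image of `π(X) = (X Xᵀ, det X)` is exactly
`M(n,ℝ) = {(A, λ) : A positive semidefinite, det A = λ²}`. -/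
theorem stmt1 (n : ℕ) (hn : 1 ≤ n) :
    Set.range (piMap n) =
      {p : {A : Matrix (Fin n) (Fin n) ℝ // A.IsSymm} × ℝ |
        (p.1 : Matrix (Fin n) (Fin n) ℝ).PosSemidef ∧
        (p.1 : Matrix (Fin n) (Fin n) ℝ).det = p.2 ^ 2} := by
  have : Nonempty (Fin n) := ⟨⟨0, hn⟩⟩
  ext ⟨⟨A, _⟩, l⟩
  simp only [Set.mem_range, Set.mem_ofPred_eq, piMap, Prod.mk.injEq, Subtype.mk.injEq]
  constructor
  · rintro ⟨X, rfl, rfl⟩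
    exact ⟨posSemidef_mul_transpose_self X, by rw [det_mul, det_transpose, sq]⟩
  · rintro ⟨hA, hdet⟩
    exact hA.exists_mul_transpose_self_eq_of_det_eq_sq hdet
end

section
/- Let n ≥ 1. The map from M(n,ℝ) = {(A, λ) ∈ Sym(n,ℝ) × ℝ : A positive semidefinite, det A = λ²} to (Sym(n,ℝ) / ℝ·I) × ℝ sending (A, λ) to (A + ℝ·I, λ) is a bijection, where A + ℝ·I denotes the image of A in the quotient of the real vector space Sym(n,ℝ) by the line spanned by the identity matrix I. -/
open Matrix

/-- The real vector space of real symmetric (self-adjoint) `n × n` matrices,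
as a submodule of the matrix space. -/
abbrev SymSub (n : ℕ) : Submodule ℝ (Matrix (Fin n) (Fin n) ℝ) :=
  selfAdjoint.submodule ℝ (Matrix (Fin n) (Fin n) ℝ)

lemma one_mem_symSub (n : ℕ) : (1 : Matrix (Fin n) (Fin n) ℝ) ∈ SymSub n :=
  IsSelfAdjoint.one _

lemma mulT_mem_symSub {n m : ℕ} (X : Matrix (Fin n) (Fin m) ℝ) : X * Xᵀ ∈ SymSub n := by
  have := Matrix.isHermitian_mul_conjTranspose_self X
  rw [Matrix.conjTranspose_eq_transpose_of_trivial] at this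
  exact this

lemma conj_mem_symSub {n : ℕ} (C : Matrix (Fin n) (Fin n) ℝ) (A : SymSub n) :
    C * (A : Matrix (Fin n) (Fin n) ℝ) * Cᵀ ∈ SymSub n := by
  have := Matrix.isHermitian_mul_mul_conjTranspose C (A.2 : (A : Matrix (Fin n) (Fin n) ℝ).IsHermitian)
  rw [Matrix.conjTranspose_eq_transpose_of_trivial] at this
  exact this

/-- The line `ℝ·I` inside the space of symmetric matrices. -/
noncomputable def lineI (n : ℕ) : Submodule ℝ (SymSub n) :=
  Submodule.span ℝ {(⟨1, one_mem_symSub n⟩ : SymSub n)}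

/-- `M(n,ℝ)`: pairs `(A, λ)` with `A` symmetric positive semidefinite and `det A = λ²`. -/
def MSet (n : ℕ) : Set (SymSub n × ℝ) :=
  {q | (q.1 : Matrix (Fin n) (Fin n) ℝ).PosSemidef ∧
    (q.1 : Matrix (Fin n) (Fin n) ℝ).det = q.2 ^ 2}

/-!
For a symmetric `B` with eigenvalues `βᵢ`, the shift `B + t • 1` has determinant `∏ (βᵢ + t)`
and is positive semidefinite once `t ≥ -min βᵢ`. On that half-line the determinant grows
continuously from `0` to `∞`, so the intermediate value theorem yields a shift with determinant
`λ²`. Conversely, adding `t • 1` with `t > 0` to a positive semidefinite matrix strictly increases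
its determinant, so two points of `M(n,ℝ)` with the same image coincide.
-/

lemma exists_shift_nonneg_prod_eq {ι : Type*} [Fintype ι] [Nonempty ι] (β : ι → ℝ) {y : ℝ}
    (hy : 0 ≤ y) : ∃ t, (∀ i, 0 ≤ β i + t) ∧ ∏ i, (β i + t) = y := by
  obtain ⟨i₀, hi₀⟩ := Finite.exists_min β
  set c := max 1 y
  have hc : 1 ≤ c := le_max_left _ _
  set f : ℝ → ℝ := fun t => ∏ i, (β i + t)
  have hf₀ : f (-β i₀) = 0 := Finset.prod_eq_zero (Finset.mem_univ i₀) (add_neg_cancel _)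
  have hfc : y ≤ f (-β i₀ + c) :=
    calc y ≤ c := le_max_right _ _
      _ ≤ c ^ Fintype.card ι := le_self_pow₀ hc Fintype.card_ne_zero
      _ = ∏ _i : ι, c := (Finset.prod_const c).symm
      _ ≤ f (-β i₀ + c) :=
        Finset.prod_le_prod (fun _ _ => by linarith) fun i _ => by linarith [hi₀ i]
  have hcont : ContinuousOn f (Set.Icc (-β i₀) (-β i₀ + c)) := by fun_prop
  obtain ⟨t, ht, hft⟩ := intermediate_value_Icc (by linarith) hcont ⟨hf₀ ▸ hy, hfc⟩
  exact ⟨t, fun i => by linarith [hi₀ i, ht.1], hft⟩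

namespace Matrix

variable {ι : Type*} [Fintype ι] [DecidableEq ι]

lemma IsHermitian.add_smul_one_eq {B : Matrix ι ι ℝ} (hB : B.IsHermitian) (t : ℝ) :
    B + t • 1 = Unitary.conjStarAlgAut ℝ _ hB.eigenvectorUnitary
      (diagonal fun i => hB.eigenvalues i + t) := by
  have hdiag : (diagonal fun i => hB.eigenvalues i + t) =
      diagonal (RCLike.ofReal ∘ hB.eigenvalues) + t • (1 : Matrix ι ι ℝ) := by
    rw [← diagonal_one, ← diagonal_smul, diagonal_add]
    simp
  rw [hdiag, map_add, map_smul, map_one, ← hB.spectral_theorem]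

lemma IsHermitian.det_add_smul_one {B : Matrix ι ι ℝ} (hB : B.IsHermitian) (t : ℝ) :
    (B + t • 1).det = ∏ i, (hB.eigenvalues i + t) := by
  rw [hB.add_smul_one_eq, Unitary.conjStarAlgAut_apply, det_mul_right_comm,
    Unitary.mul_star_self_of_mem hB.eigenvectorUnitary.2]
  simp

lemma IsHermitian.posSemidef_add_smul_one {B : Matrix ι ι ℝ} (hB : B.IsHermitian) {t : ℝ}
    (ht : ∀ i, 0 ≤ hB.eigenvalues i + t) : (B + t • 1).PosSemidef := by
  rw [hB.add_smul_one_eq, Unitary.conjStarAlgAut_apply, star_eq_conjTranspose]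
  exact (posSemidef_diagonal_iff.mpr ht).mul_mul_conjTranspose_same _

lemma PosSemidef.det_lt_det_add_smul_one [Nonempty ι] {Q : Matrix ι ι ℝ} (hQ : Q.PosSemidef)
    {t : ℝ} (ht : 0 < t) : Q.det < (Q + t • 1).det := by
  have hev := hQ.eigenvalues_nonneg
  rw [hQ.1.det_eq_prod_eigenvalues, hQ.1.det_add_smul_one]
  by_cases hzero : ∃ i, hQ.1.eigenvalues i = 0
  · obtain ⟨i, hi⟩ := hzero
    simp only [RCLike.ofReal_real_eq_id, id_eq]
    rw [Finset.prod_eq_zero (Finset.mem_univ i) hi]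
    exact Finset.prod_pos fun j _ => by linarith [hev j]
  · push Not at hzero
    exact Finset.prod_lt_prod_of_nonempty (fun i _ => (hev i).lt_of_ne' (hzero i))
      (fun i _ => by simp only [RCLike.ofReal_real_eq_id, id_eq]; linarith) Finset.univ_nonempty

lemma PosSemidef.eq_zero_of_eq_add_smul_one_of_det_eq [Nonempty ι] {P Q : Matrix ι ι ℝ}
    (hP : P.PosSemidef) (hQ : Q.PosSemidef) {t : ℝ} (hPQ : P = Q + t • 1)
    (hdet : P.det = Q.det) : t = 0 := by
  rcases lt_trichotomy t 0 with hneg | hzero | hpos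
  · have hQP : Q = P + (-t) • 1 := by rw [hPQ]; module
    have := hP.det_lt_det_add_smul_one (neg_pos.mpr hneg)
    rw [← hQP] at this
    linarith
  · exact hzero
  · have := hQ.det_lt_det_add_smul_one hpos
    rw [← hPQ] at this
    linarith

lemma IsHermitian.exists_posSemidef_add_smul_one_det_eq [Nonempty ι]
    {B : Matrix ι ι ℝ} (hB : B.IsHermitian) {y : ℝ} (hy : 0 ≤ y) :
    ∃ t : ℝ, (B + t • 1).PosSemidef ∧ (B + t • 1).det = y := by
  obtain ⟨t, hpos, hprod⟩ := exists_shift_nonneg_prod_eq hB.eigenvalues hy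
  exact ⟨t, hB.posSemidef_add_smul_one hpos, hB.det_add_smul_one t ▸ hprod⟩

end Matrix

lemma mk_eq_mk_lineI_iff {n : ℕ} {A B : SymSub n} :
    (Submodule.Quotient.mk A : SymSub n ⧸ lineI n) = Submodule.Quotient.mk B ↔
      ∃ t : ℝ, (A : Matrix (Fin n) (Fin n) ℝ) = B + t • 1 := by
  rw [Submodule.Quotient.eq, lineI, Submodule.mem_span_singleton]
  refine exists_congr fun t => ⟨fun h => ?_, fun h => Subtype.ext ?_⟩
  · rw [← sub_add_cancel A B, ← h]
    exact add_comm _ _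
  · simp [h]

/-- The map `M(n,ℝ) → (Sym(n,ℝ)/ℝ·I) × ℝ`, `(A, λ) ↦ (A + ℝ·I, λ)`, is a bijection. -/
theorem stmt4 (n : ℕ) (hn : 1 ≤ n) :
    Function.Bijective (fun p : MSet n =>
      ((Submodule.Quotient.mk p.1.1 : SymSub n ⧸ lineI n), p.1.2)) := by
  have : Nonempty (Fin n) := ⟨⟨0, hn⟩⟩
  constructor
  · rintro ⟨⟨A, l⟩, hA⟩ ⟨⟨B, l'⟩, hB⟩ h
    obtain ⟨hAB, rfl⟩ := Prod.mk.inj h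
    obtain ⟨t, ht⟩ := mk_eq_mk_lineI_iff.mp hAB
    obtain rfl := hA.1.eq_zero_of_eq_add_smul_one_of_det_eq hB.1 ht (hA.2.trans hB.2.symm)
    rw [zero_smul, add_zero] at ht
    obtain rfl : A = B := Subtype.ext ht
    rfl
  · rintro ⟨c, l⟩
    obtain ⟨B, rfl⟩ := Submodule.Quotient.mk_surjective (lineI n) c
    have hB : (B : Matrix (Fin n) (Fin n) ℝ).IsHermitian := B.2
    obtain ⟨t, hpsd, hdet⟩ := hB.exists_posSemidef_add_smul_one_det_eq (sq_nonneg l)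
    refine ⟨⟨(B + t • ⟨1, one_mem_symSub n⟩, l), hpsd, hdet⟩, ?_⟩
    exact Prod.ext (mk_eq_mk_lineI_iff.mpr ⟨t, rfl⟩) rfl
end

section
/- Let n ≥ 1 and let S₀(n,ℝ) denote the set of real symmetric n×n matrices that are positive semidefinite and singular (determinant zero). Then the map S₀(n,ℝ) → Sym(n,ℝ)/ℝ·I sending A to its coset A + ℝ·I is a bijection; i.e., every coset of ℝ·I in Sym(n,ℝ) contains exactly one singular positive semidefinite matrix. -/
open Matrix

/-- `S₀(n,ℝ)`: singular positive semidefinite symmetric matrices. -/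
def S0 (n : ℕ) : Set (SymSub n) :=
  {A | (A : Matrix (Fin n) (Fin n) ℝ).PosSemidef ∧ (A : Matrix (Fin n) (Fin n) ℝ).det = 0}

/-!
For symmetric `A`, the matrix `A - c • 1` is positive semidefinite iff `c` lies below the whole
spectrum of `A`, and singular iff `c` belongs to it. So `A - c • 1 ∈ S₀` exactly when `c` is the
least eigenvalue of `A`, and each coset `A + ℝ·I` meets `S₀` in the single point
`A - λ_min(A) • 1`.
-/

open scoped ComplexOrder

namespace Matrix

variable {n 𝕜 : Type*} [Fintype n] [DecidableEq n] [RCLike 𝕜] {A : Matrix n n 𝕜}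

lemma IsHermitian.posSemidef_iff_spectrum_real_nonneg (hA : A.IsHermitian) :
    A.PosSemidef ↔ ∀ x ∈ spectrum ℝ A, 0 ≤ x := by
  simp [hA.posSemidef_iff_eigenvalues_nonneg, hA.spectrum_real_eq_range_eigenvalues, Pi.le_def]

lemma det_eq_zero_iff_zero_mem_spectrum_real : A.det = 0 ↔ (0 : ℝ) ∈ spectrum ℝ A := by
  rw [spectrum.zero_mem_iff, isUnit_iff_isUnit_det, isUnit_iff_ne_zero, not_not]

lemma IsHermitian.posSemidef_sub_smul_one_and_det_eq_zero_iff (hA : A.IsHermitian) (c : ℝ) :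
    (A - c • 1).PosSemidef ∧ (A - c • 1).det = 0 ↔ IsLeast (spectrum ℝ A) c := by
  have hB : (A - c • 1).IsHermitian := hA.sub (isHermitian_one.smul (IsSelfAdjoint.all c))
  rw [hB.posSemidef_iff_spectrum_real_nonneg, det_eq_zero_iff_zero_mem_spectrum_real,
    ← Algebra.algebraMap_eq_smul_one, ← spectrum.sub_singleton_eq, Set.sub_singleton,
    Set.forall_mem_image]
  simp only [Set.mem_image, sub_nonneg, sub_eq_zero, exists_eq_right]
  exact and_comm

lemma IsHermitian.exists_isLeast_spectrum_real [Nonempty n] (hA : A.IsHermitian) :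
    ∃ c, IsLeast (spectrum ℝ A) c :=
  let hne : (spectrum ℝ A).Nonempty := ⟨_, hA.eigenvalues_mem_spectrum_real (Classical.arbitrary n)⟩
  ⟨_, hne.csInf_mem A.finite_real_spectrum, fun _ hx => csInf_le A.finite_real_spectrum.bddBelow hx⟩

end Matrix

abbrev oneSymSub (n : ℕ) : SymSub n := ⟨1, one_mem_symSub n⟩

lemma sub_smul_oneSymSub_mem_S0_iff {n : ℕ} (A : SymSub n) (c : ℝ) :
    A - c • oneSymSub n ∈ S0 n ↔ IsLeast (spectrum ℝ (A : Matrix (Fin n) (Fin n) ℝ)) c :=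
  Matrix.IsHermitian.posSemidef_sub_smul_one_and_det_eq_zero_iff A.2 c

lemma mk_eq_mk_iff_exists_sub_eq_smul {n : ℕ} {A B : SymSub n} :
    (Submodule.Quotient.mk A : SymSub n ⧸ lineI n) = Submodule.Quotient.mk B ↔
      ∃ c : ℝ, B = A - c • oneSymSub n := by
  rw [Submodule.Quotient.eq, lineI, Submodule.mem_span_singleton]
  exact exists_congr fun c => by rw [eq_sub_iff_add_eq, eq_sub_iff_add_eq, add_comm]

/-- The map `S₀(n,ℝ) → Sym(n,ℝ)/ℝ·I`, `A ↦ A + ℝ·I`, is a bijection: every coset of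
`ℝ·I` contains exactly one singular positive semidefinite matrix. -/
theorem stmt6 (n : ℕ) (hn : 1 ≤ n) :
    Function.Bijective (fun A : S0 n =>
      (Submodule.Quotient.mk A.1 : SymSub n ⧸ lineI n)) := by
  constructor
  · rintro ⟨A, hA⟩ ⟨B, hB⟩ hAB
    obtain ⟨c, rfl⟩ := mk_eq_mk_iff_exists_sub_eq_smul.1 hAB
    have hc : IsLeast (spectrum ℝ (A : Matrix (Fin n) (Fin n) ℝ)) c :=
      (sub_smul_oneSymSub_mem_S0_iff A c).1 hB
    have h0 : IsLeast (spectrum ℝ (A : Matrix (Fin n) (Fin n) ℝ)) 0 :=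
      (sub_smul_oneSymSub_mem_S0_iff A 0).1 (by simpa using hA)
    simp [hc.unique h0]
  · intro q
    obtain ⟨A, rfl⟩ := Submodule.Quotient.mk_surjective _ q
    have : Nonempty (Fin n) := ⟨⟨0, hn⟩⟩
    obtain ⟨c, hc⟩ := Matrix.IsHermitian.exists_isLeast_spectrum_real A.2
    exact ⟨⟨_, (sub_smul_oneSymSub_mem_S0_iff A c).2 hc⟩,
      (mk_eq_mk_iff_exists_sub_eq_smul.2 ⟨c, rfl⟩).symm⟩
end

section
/- Let n, m ≥ 0 and consider the map π : Matrix (Fin n) (Fin m) ℝ → Sym(n,ℝ), π(X) = X Xᵀ, on real n×m matrices (viewed as linear maps ℝᵐ → ℝⁿ). Then the fibres of π coincide exactly with the orbits of the right action of the orthogonal group O(m) given by X ↦ X C⁻¹: that is, π(X) = π(Y) if and only if Y = X C for some C ∈ O(m). -/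
/-!
`X Xᴴ = Y Yᴴ` says exactly that `‖Xᴴ v‖ = ‖Yᴴ v‖` for every `v`. Hence `Xᴴ v ↦ Yᴴ v` is a
well-defined isometry from the range of `Xᴴ` into the ambient space; extending it to a linear
isometry of the whole space gives a unitary `U` with `U Xᴴ = Yᴴ`, i.e. `Y = X Uᴴ`.
-/

open Matrix LinearMap

section

variable {𝕜 E F : Type*} [RCLike 𝕜] [AddCommGroup E] [Module 𝕜 E]
  [NormedAddCommGroup F] [InnerProductSpace 𝕜 F] [FiniteDimensional 𝕜 F]

theorem LinearMap.exists_linearIsometry_comp_eq_of_norm_eq_s10 {A B : E →ₗ[𝕜] F}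
    (h : ∀ v, ‖A v‖ = ‖B v‖) : ∃ L : F →ₗᵢ[𝕜] F, L.toLinearMap ∘ₗ A = B := by
  have hker : ker A ≤ ker B := fun v hv => by
    simpa [h] using congrArg norm (mem_ker.mp hv)
  let g : range A →ₗ[𝕜] F := (ker A).liftQ B hker ∘ₗ A.quotKerEquivRange.symm.toLinearMap
  have hg : ∀ v, g (A.rangeRestrict v) = B v := fun v => by
    have : A.quotKerEquivRange.symm (A.rangeRestrict v) = (ker A).mkQ v :=
      A.quotKerEquivRange.symm_apply_eq.mpr rfl
    simp [g, this]
  let f : range A →ₗᵢ[𝕜] F :=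
    ⟨g, fun s => by
      obtain ⟨v, rfl⟩ := A.surjective_rangeRestrict s
      rw [hg, ← h]; rfl⟩
  refine ⟨f.extend, LinearMap.ext fun v => ?_⟩
  exact (f.extend_apply (A.rangeRestrict v)).trans (hg v)

end

namespace Matrix

variable {𝕜 m n : Type*} [RCLike 𝕜] [Fintype m] [DecidableEq m] [Fintype n] [DecidableEq n]

theorem toEuclideanLin_symm_mem_unitaryGroup
    (L : EuclideanSpace 𝕜 n →ₗᵢ[𝕜] EuclideanSpace 𝕜 n) :
    toEuclideanLin.symm L.toLinearMap ∈ unitaryGroup n 𝕜 :=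
  (L.toLinearIsometryEquiv rfl).toMatrix_mem_unitaryGroup
    (EuclideanSpace.basisFun n 𝕜) (EuclideanSpace.basisFun n 𝕜)

theorem inner_toEuclideanLin_conjTranspose (A : Matrix m n 𝕜) (v w : EuclideanSpace 𝕜 m) :
    inner 𝕜 (toEuclideanLin Aᴴ v) (toEuclideanLin Aᴴ w) =
      inner 𝕜 v (toEuclideanLin (A * Aᴴ) w) := by
  rw [← adjoint_inner_right, ← toEuclideanLin_conjTranspose_eq_adjoint,
    conjTranspose_conjTranspose, toLpLin_mul_same, LinearMap.comp_apply]

theorem norm_toEuclideanLin_conjTranspose_eq {A B : Matrix m n 𝕜} (h : A * Aᴴ = B * Bᴴ)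
    (v : EuclideanSpace 𝕜 m) : ‖toEuclideanLin Aᴴ v‖ = ‖toEuclideanLin Bᴴ v‖ := by
  rw [norm_eq_sqrt_re_inner (𝕜 := 𝕜), norm_eq_sqrt_re_inner (𝕜 := 𝕜),
    inner_toEuclideanLin_conjTranspose, inner_toEuclideanLin_conjTranspose, h]

theorem mul_conjTranspose_eq_iff_exists_mem_unitaryGroup {X Y : Matrix m n 𝕜} :
    X * Xᴴ = Y * Yᴴ ↔ ∃ U ∈ unitaryGroup n 𝕜, Y = X * U := by
  constructor
  · intro h
    obtain ⟨L, hL⟩ :=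
      LinearMap.exists_linearIsometry_comp_eq_of_norm_eq_s10 (norm_toEuclideanLin_conjTranspose_eq h)
    set U := toEuclideanLin.symm L.toLinearMap
    have hUX : U * Xᴴ = Yᴴ := toEuclideanLin.injective <| by
      rw [toLpLin_mul_same, LinearEquiv.apply_symm_apply, hL]
    refine ⟨star U, Unitary.star_mem (toEuclideanLin_symm_mem_unitaryGroup L), ?_⟩
    rw [star_eq_conjTranspose, ← conjTranspose_conjTranspose Y, ← hUX, conjTranspose_mul,
      conjTranspose_conjTranspose]
  · rintro ⟨U, hU, rfl⟩
    rw [conjTranspose_mul, Matrix.mul_assoc, ← Matrix.mul_assoc U, ← star_eq_conjTranspose,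
      mem_unitaryGroup_iff.mp hU, Matrix.one_mul]

end Matrix

/-- The fibres of `π(X) = X Xᵀ` on real `n × m` matrices coincide with the orbits of the
right action `X ↦ X C⁻¹` of the orthogonal group `O(m)`. -/
theorem stmt10 (n m : ℕ) (X Y : Matrix (Fin n) (Fin m) ℝ) :
    X * Xᵀ = Y * Yᵀ ↔
      ∃ C : Matrix (Fin m) (Fin m) ℝ, C * Cᵀ = 1 ∧ Y = X * C := by
  simpa [mem_unitaryGroup_iff, star_eq_conjTranspose, conjTranspose_eq_transpose_of_trivial]
    using mul_conjTranspose_eq_iff_exists_mem_unitaryGroup (X := X) (Y := Y)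
end

section
/- The map γ : ℂ × ℂ → ℝ × ℂ, γ(λ, μ) = (|λ|² − |μ|², λμ), is surjective, and its fibres coincide exactly with the orbits of the action of the circle group 𝕋 = {c ∈ ℂ : |c| = 1} on ℂ × ℂ given by c · (λ, μ) = (cλ, c⁻¹μ): that is, γ(λ, μ) = γ(λ', μ') if and only if (λ', μ') = (cλ, c⁻¹μ) for some c ∈ ℂ with |c| = 1. -/
/-!
Since `(|λ|² + |μ|²)² = (|λ|² − |μ|²)² + 4|λμ|²`, the value `γ(λ, μ)` determines both `|λ|` and
`|μ|`. Two pairs with the same image are then related by a unit `c` with `λ' = cλ` (or, when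
`λ = 0`, with `μ = cμ'`), and `λμ = λ'μ'` forces `μ' = c⁻¹μ`. For surjectivity onto `(t, z)`,
solve `x² − y² = t`, `xy = |z|` in nonnegative reals and give `y` the phase of `z`.
-/

/-- The map `γ(λ, μ) = (|λ|² − |μ|², λμ)`. -/
noncomputable def gamma (p : ℂ × ℂ) : ℝ × ℂ :=
  (‖p.1‖ ^ 2 - ‖p.2‖ ^ 2, p.1 * p.2)

theorem RCLike.exists_norm_eq_one_and_eq_mul_of_norm_eq {K : Type*} [RCLike K] {a b : K}
    (h : ‖a‖ = ‖b‖) : ∃ c : K, ‖c‖ = 1 ∧ b = c * a := by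
  obtain ⟨c, hc, hca⟩ := RCLike.exists_norm_eq_mul_self a
  obtain ⟨d, hd, hdb⟩ := RCLike.exists_norm_mul_eq_self b
  exact ⟨d * c, by rw [norm_mul, hc, hd, one_mul], by rw [← hdb, ← h, hca, mul_assoc]⟩

theorem Real.exists_sq_sub_sq_eq_and_mul_eq (t : ℝ) {r : ℝ} (hr : 0 ≤ r) :
    ∃ x y : ℝ, 0 ≤ x ∧ 0 ≤ y ∧ x ^ 2 - y ^ 2 = t ∧ x * y = r := by
  set s := √(t ^ 2 + 4 * r ^ 2)
  have hs : s ^ 2 = t ^ 2 + 4 * r ^ 2 := Real.sq_sqrt (by positivity)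
  have hts : |t| ≤ s := Real.abs_le_sqrt (by nlinarith)
  have hx : 0 ≤ (s + t) / 2 := by linarith [neg_abs_le t]
  have hy : 0 ≤ (s - t) / 2 := by linarith [le_abs_self t]
  refine ⟨√((s + t) / 2), √((s - t) / 2), Real.sqrt_nonneg _, Real.sqrt_nonneg _, ?_, ?_⟩
  · rw [Real.sq_sqrt hx, Real.sq_sqrt hy]
    ring
  · rw [← Real.sqrt_mul hx, ← Real.sqrt_sq hr]
    congr 1
    linear_combination hs / 4

theorem gamma_surjective : Function.Surjective gamma := by
  rintro ⟨t, z⟩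
  obtain ⟨x, y, hx, hy, hxy, hxyz⟩ := Real.exists_sq_sub_sq_eq_and_mul_eq t (norm_nonneg z)
  obtain ⟨u, hu, huz⟩ := Complex.exists_norm_mul_eq_self z
  refine ⟨(x, y * u), ?_⟩
  simp only [gamma, Prod.mk.injEq, norm_mul, hu, Complex.norm_real, Real.norm_of_nonneg hx,
    Real.norm_of_nonneg hy, mul_one, hxy, true_and]
  rw [← huz, ← hxyz]
  push_cast
  ring

theorem norm_eq_of_gamma_eq {p q : ℂ × ℂ} (h : gamma p = gamma q) :
    ‖p.1‖ = ‖q.1‖ ∧ ‖p.2‖ = ‖q.2‖ := by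
  simp only [gamma, Prod.mk.injEq] at h
  obtain ⟨hdiff, hprod⟩ := h
  have hnorm : ‖p.1‖ * ‖p.2‖ = ‖q.1‖ * ‖q.2‖ := by rw [← norm_mul, ← norm_mul, hprod]
  have hsq (x y : ℝ) : (x ^ 2 + y ^ 2) ^ 2 = (x ^ 2 - y ^ 2) ^ 2 + 4 * (x * y) ^ 2 := by ring
  have hsum : ‖p.1‖ ^ 2 + ‖p.2‖ ^ 2 = ‖q.1‖ ^ 2 + ‖q.2‖ ^ 2 := by
    refine (pow_left_inj₀ (by positivity) (by positivity) two_ne_zero).1 ?_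
    rw [hsq, hsq, hdiff, hnorm]
  constructor <;> refine (pow_left_inj₀ (norm_nonneg _) (norm_nonneg _) two_ne_zero).1 ?_ <;>
    linarith

theorem gamma_mul_inv {c : ℂ} (hc : ‖c‖ = 1) (p : ℂ × ℂ) :
    gamma (c * p.1, c⁻¹ * p.2) = gamma p := by
  have hc0 : c ≠ 0 := ne_zero_of_norm_ne_zero (by rw [hc]; exact one_ne_zero)
  simp only [gamma, norm_mul, norm_inv, hc, inv_one, one_mul, Prod.mk.injEq, true_and]
  field_simp

theorem exists_eq_mul_of_gamma_eq {p q : ℂ × ℂ} (h : gamma p = gamma q) :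
    ∃ c : ℂ, ‖c‖ = 1 ∧ q = (c * p.1, c⁻¹ * p.2) := by
  obtain ⟨h1, h2⟩ := norm_eq_of_gamma_eq h
  have hprod : p.1 * p.2 = q.1 * q.2 := congrArg Prod.snd h
  by_cases hp : p.1 = 0
  · have hq : q.1 = 0 := by rwa [hp, norm_zero, eq_comm, norm_eq_zero] at h1
    obtain ⟨c, hc, hcp⟩ := RCLike.exists_norm_eq_one_and_eq_mul_of_norm_eq h2.symm
    have hc0 : c ≠ 0 := ne_zero_of_norm_ne_zero (by rw [hc]; exact one_ne_zero)
    exact ⟨c, hc, Prod.ext (by rw [hp, hq, mul_zero]) (by rw [hcp, inv_mul_cancel_left₀ hc0])⟩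
  · obtain ⟨c, hc, hcq⟩ := RCLike.exists_norm_eq_one_and_eq_mul_of_norm_eq h1
    have hc0 : c ≠ 0 := ne_zero_of_norm_ne_zero (by rw [hc]; exact one_ne_zero)
    refine ⟨c, hc, Prod.ext hcq ?_⟩
    apply mul_left_cancel₀ (mul_ne_zero hc0 hp)
    calc c * p.1 * q.2 = p.1 * p.2 := by rw [← hcq, hprod]
      _ = c * p.1 * (c⁻¹ * p.2) := by field_simp

/-- `γ` is surjective and its fibres coincide with the orbits of the circle-group action
`c · (λ, μ) = (cλ, c⁻¹μ)`. -/
theorem stmt16 :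
    Function.Surjective gamma ∧
    ∀ p q : ℂ × ℂ,
      gamma p = gamma q ↔
        ∃ c : ℂ, ‖c‖ = 1 ∧ q = (c * p.1, c⁻¹ * p.2) := by
  refine ⟨gamma_surjective, fun p q => ⟨exists_eq_mul_of_gamma_eq, ?_⟩⟩
  rintro ⟨c, hc, rfl⟩
  exact (gamma_mul_inv hc p).symm
end
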